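/- Let n, t be positive integers, let z, ξ be complex numbers, and let F ∈ ℂ[T] be a nonzero polynomial of degree at most n. For each integer ℓ ≥ 0, the polynomial F̃(T) = (T−z)^ℓ F(T) satisfies max_{0 ≤ j < t} |F̃^{[j]}(ξ)| / ‖F̃‖ ≤ e^{deg(F̃)} (2+|ξ|)^ℓ · max_{0 ≤ j < t} |F^{[j]}(ξ)| / ‖F‖. Moreover, when z = 0 the factor e^{deg(F̃)} can be omitted. -/

import Mathlib

/-- The norm of a complex polynomial: the maximum of the absolute values of its coefficients. -/
noncomputable def cnorm (P : Polynomial ℂ) : ℝ :=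
  (Finset.range (P.natDegree + 1)).sup' Finset.nonempty_range_add_one fun i =>
    ‖P.coeff i‖

/-!
Taylor expansion at `ξ` turns multiplication by `(T - z)^ℓ` into multiplication by
`(T + (ξ - z))^ℓ`, so each of the first `t` divided derivatives of `F̃` at `ξ` is at most
`(1 + |ξ - z|)^ℓ` times the largest one of `F`. For the norms, the Mahler measure `M` is
multiplicative with `M(T - z) = max(1, |z|)`, and it compares with the coefficient norm both ways:
`‖F‖ ≤ 2^(deg F) M(F)` and `M(F̃) ≤ √(deg F̃ + 1) ‖F̃‖`. Hence
`‖F‖ max(1, |z|)^ℓ ≤ e^(deg F̃) ‖F̃‖`, and `1 + |ξ - z| ≤ (2 + |ξ|) max(1, |z|)` finishes the proof.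
For `z = 0` the norm does not change at all: `‖T^ℓ F‖ = ‖F‖`.
-/

open Polynomial Finset

namespace Polynomial

variable {R : Type*}

theorem norm_coeff_X_add_C_pow_mul_le [SeminormedRing R] (w : R) (ℓ : ℕ) (G : R[X]) {j : ℕ}
    {M : ℝ} (hM : ∀ k ≤ j, ‖G.coeff k‖ ≤ M) :
    ‖((X + C w) ^ ℓ * G).coeff j‖ ≤ (1 + ‖w‖) ^ ℓ * M := by
  induction ℓ generalizing j with
  | zero => simpa using hM j le_rfl
  | succ ℓ ih =>
    have hH : ∀ k ≤ j, ‖((X + C w) ^ ℓ * G).coeff k‖ ≤ (1 + ‖w‖) ^ ℓ * M :=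
      fun k hk => ih fun i hi => hM i (hi.trans hk)
    have hM0 : 0 ≤ (1 + ‖w‖) ^ ℓ * M := (norm_nonneg _).trans (hH 0 (Nat.zero_le j))
    rw [pow_succ', mul_assoc, add_mul, coeff_add, coeff_C_mul, pow_succ', mul_assoc]
    refine (norm_add_le _ _).trans ?_
    have hX : ‖(X * ((X + C w) ^ ℓ * G)).coeff j‖ ≤ (1 + ‖w‖) ^ ℓ * M := by
      rcases j with _ | j
      · simpa using hM0
      · rw [coeff_X_mul]; exact hH j (Nat.le_succ j)
    have hC : ‖w * ((X + C w) ^ ℓ * G).coeff j‖ ≤ ‖w‖ * ((1 + ‖w‖) ^ ℓ * M) :=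
      (norm_mul_le _ _).trans (mul_le_mul_of_nonneg_left (hH j le_rfl) (norm_nonneg w))
    linarith

theorem norm_eval_hasseDeriv_X_sub_C_pow_mul_le [SeminormedCommRing R] (z ξ : R) (ℓ : ℕ)
    (F : R[X]) {j : ℕ} {M : ℝ} (hM : ∀ k ≤ j, ‖(hasseDeriv k F).eval ξ‖ ≤ M) :
    ‖(hasseDeriv j ((X - C z) ^ ℓ * F)).eval ξ‖ ≤ (1 + ‖ξ - z‖) ^ ℓ * M := by
  have htaylor : taylor ξ ((X - C z) ^ ℓ) = (X + C (ξ - z)) ^ ℓ := by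
    rw [taylor_apply, pow_comp, sub_comp, X_comp, C_comp, C_sub]; ring
  rw [← taylor_coeff, taylor_mul, htaylor]
  exact norm_coeff_X_add_C_pow_mul_le _ ℓ _ fun k hk => by rw [taylor_coeff]; exact hM k hk

theorem mahlerMeasure_pow (p : ℂ[X]) (n : ℕ) : (p ^ n).mahlerMeasure = p.mahlerMeasure ^ n := by
  induction n with
  | zero => simp
  | succ n ih => rw [pow_succ, mahlerMeasure_mul, ih, pow_succ]

theorem supNorm_X_pow_mul [SeminormedRing R] (ℓ : ℕ) (F : R[X]) :
    (X ^ ℓ * F).supNorm = F.supNorm := by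
  obtain ⟨i, hi⟩ := (X ^ ℓ * F).exists_eq_supNorm
  refine le_antisymm ?_ ?_
  · rw [hi, coeff_X_pow_mul']
    split_ifs
    · exact F.le_supNorm _
    · simpa using F.supNorm_nonneg
  · obtain ⟨k, hk⟩ := F.exists_eq_supNorm
    rw [hk, ← coeff_X_pow_mul F ℓ k]
    exact le_supNorm _ _

theorem supNorm_pos [NormedRing R] {p : R[X]} (hp : p ≠ 0) : 0 < p.supNorm :=
  p.supNorm_nonneg.lt_of_ne' ((supNorm_eq_zero_iff p).not.mpr hp)

end Polynomial

theorem cnorm_eq_supNorm (P : ℂ[X]) : cnorm P = P.supNorm := by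
  refine le_antisymm (sup'_le _ _ fun i _ => P.le_supNorm i) ?_
  obtain ⟨i, hi⟩ := P.exists_eq_supNorm
  rcases le_or_gt i P.natDegree with h | h
  · exact hi ▸ le_sup' (fun i => ‖P.coeff i‖) (mem_range.mpr (Nat.lt_succ_of_le h))
  · rw [hi, P.coeff_eq_zero_of_natDegree_lt h, norm_zero]
    exact (norm_nonneg _).trans
      (le_sup' (fun i => ‖P.coeff i‖) (mem_range.mpr P.natDegree.succ_pos))

theorem four_pow_mul_le_seven_pow (k : ℕ) : 4 ^ k * (k + 2) ≤ 7 ^ (k + 1) := by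
  induction k with
  | zero => norm_num
  | succ k ih => rw [pow_succ, pow_succ]; nlinarith [pow_pos (by norm_num : 0 < 4) k]

-- `(2^m √(D + 1))² ≤ 4^(D - 1) (D + 1) ≤ 7^D ≤ e^(2D)`
theorem two_pow_mul_sqrt_le_exp {m D : ℕ} (h : m < D) : 2 ^ m * √(D + 1 : ℝ) ≤ Real.exp D := by
  obtain ⟨k, rfl⟩ : ∃ k, D = k + 1 := ⟨D - 1, by omega⟩
  have h7 : (7 : ℝ) ≤ Real.exp 2 := by
    have := Real.exp_one_gt_d9
    rw [show Real.exp 2 = Real.exp 1 ^ 2 by rw [← Real.exp_nat_mul]; norm_num]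
    nlinarith
  calc 2 ^ m * √((k + 1 : ℕ) + 1 : ℝ) ≤ 2 ^ k * √(k + 2 : ℝ) := by
        push_cast
        rw [add_assoc, one_add_one_eq_two]
        gcongr
        · norm_num
        · omega
    _ = √((4 : ℝ) ^ k * (k + 2)) := by
        rw [Real.sqrt_mul (by positivity), show (4 : ℝ) = 2 ^ 2 by norm_num, ← pow_mul,
          pow_mul', Real.sqrt_sq (by positivity)]
    _ ≤ √((7 : ℝ) ^ (k + 1)) := Real.sqrt_le_sqrt (by exact_mod_cast four_pow_mul_le_seven_pow k)
    _ ≤ √(Real.exp 2 ^ (k + 1)) := Real.sqrt_le_sqrt (by gcongr)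
    _ = Real.exp (k + 1 : ℕ) := by
        rw [← Real.exp_nat_mul, ← Real.exp_half]; congr 1; push_cast; ring

theorem supNorm_mul_max_one_pow_le (z : ℂ) (ℓ : ℕ) {F : ℂ[X]} (hF : F ≠ 0) :
    F.supNorm * max 1 ‖z‖ ^ ℓ ≤
      Real.exp ((X - C z) ^ ℓ * F).natDegree * ((X - C z) ^ ℓ * F).supNorm := by
  rcases Nat.eq_zero_or_pos ℓ with rfl | hℓ
  · simpa using le_mul_of_one_le_left F.supNorm_nonneg (Real.one_le_exp (Nat.cast_nonneg _))
  set Ft := (X - C z) ^ ℓ * F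
  have hdeg : F.natDegree < Ft.natDegree := by
    rw [natDegree_mul (pow_ne_zero _ (X_sub_C_ne_zero z)) hF, natDegree_pow, natDegree_X_sub_C]
    omega
  have hmahler : F.mahlerMeasure * max 1 ‖z‖ ^ ℓ = Ft.mahlerMeasure := by
    rw [mahlerMeasure_mul, mahlerMeasure_pow, mahlerMeasure_X_sub_C, mul_comm]
  calc F.supNorm * max 1 ‖z‖ ^ ℓ
      ≤ F.natDegree.choose (F.natDegree / 2) * F.mahlerMeasure * max 1 ‖z‖ ^ ℓ := by
        gcongr; exact F.supNorm_le_choose_natDegree_div_two_mul_mahlerMeasure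
    _ ≤ 2 ^ F.natDegree * Ft.mahlerMeasure := by
        rw [mul_assoc, hmahler]
        gcongr
        · exact Ft.mahlerMeasure_nonneg
        · exact_mod_cast Nat.choose_le_two_pow _ _
    _ ≤ 2 ^ F.natDegree * (√(Ft.natDegree + 1) * Ft.supNorm) := by
        gcongr; exact Ft.mahlerMeasure_le_sqrt_natDegree_add_one_mul_supNorm
    _ ≤ Real.exp Ft.natDegree * Ft.supNorm := by
        rw [← mul_assoc]
        gcongr
        · exact Ft.supNorm_nonneg
        · exact_mod_cast two_pow_mul_sqrt_le_exp hdeg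

theorem sup'_norm_eval_hasseDeriv_div_supNorm_le {t : ℕ} (hs : (range t).Nonempty) (z ξ : ℂ)
    (ℓ : ℕ) {F : ℂ[X]} (hF : F ≠ 0) {A : ℝ}
    (hA : (1 + ‖ξ - z‖) ^ ℓ * F.supNorm ≤ A * ((X - C z) ^ ℓ * F).supNorm) :
    (range t).sup' hs (fun j => ‖(hasseDeriv j ((X - C z) ^ ℓ * F)).eval ξ‖ /
        ((X - C z) ^ ℓ * F).supNorm) ≤
      A * (range t).sup' hs (fun j => ‖(hasseDeriv j F).eval ξ‖ / F.supNorm) := by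
  set S := (range t).sup' hs (fun j => ‖(hasseDeriv j F).eval ξ‖ / F.supNorm)
  have hFpos : 0 < F.supNorm := supNorm_pos hF
  have hFtpos : 0 < ((X - C z) ^ ℓ * F).supNorm :=
    supNorm_pos (mul_ne_zero (pow_ne_zero _ (X_sub_C_ne_zero z)) hF)
  have hS : ∀ k < t, ‖(hasseDeriv k F).eval ξ‖ ≤ S * F.supNorm := fun k hk =>
    (div_le_iff₀ hFpos).mp (le_sup' (fun j => ‖(hasseDeriv j F).eval ξ‖ / F.supNorm)
      (mem_range.mpr hk))
  have hS0 : 0 ≤ S := by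
    obtain ⟨k, hk⟩ := hs
    exact (div_nonneg (norm_nonneg _) hFpos.le).trans
      (le_sup' (fun j => ‖(hasseDeriv j F).eval ξ‖ / F.supNorm) hk)
  refine sup'_le _ _ fun j hj => (div_le_iff₀ hFtpos).mpr ?_
  calc ‖(hasseDeriv j ((X - C z) ^ ℓ * F)).eval ξ‖ ≤ (1 + ‖ξ - z‖) ^ ℓ * (S * F.supNorm) :=
        norm_eval_hasseDeriv_X_sub_C_pow_mul_le z ξ ℓ F fun k hk =>
          hS k (hk.trans_lt (mem_range.mp hj))
    _ = (1 + ‖ξ - z‖) ^ ℓ * F.supNorm * S := by ring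
    _ ≤ A * ((X - C z) ^ ℓ * F).supNorm * S := by gcongr
    _ = _ := by ring

theorem one_add_norm_sub_le {E : Type*} [SeminormedAddCommGroup E] (ξ z : E) :
    1 + ‖ξ - z‖ ≤ (2 + ‖ξ‖) * max 1 ‖z‖ := by
  have := norm_sub_le ξ z
  have := le_max_left 1 ‖z‖
  have := le_max_right 1 ‖z‖
  nlinarith [norm_nonneg ξ]

theorem stmt_1_general (t : ℕ) (ht : 0 < t) (z ξ : ℂ) (F : Polynomial ℂ)
    (hF : F ≠ 0) (ℓ : ℕ)
    (Ft : Polynomial ℂ) (hFt : Ft = (Polynomial.X - Polynomial.C z) ^ ℓ * F) :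
    (((Finset.range t).sup' (Finset.nonempty_range_iff.mpr ht.ne') fun j =>
        ‖(Polynomial.hasseDeriv j Ft).eval ξ‖ / cnorm Ft) ≤
      Real.exp (Ft.natDegree : ℝ) * (2 + ‖ξ‖) ^ ℓ *
        ((Finset.range t).sup' (Finset.nonempty_range_iff.mpr ht.ne') fun j =>
          ‖(Polynomial.hasseDeriv j F).eval ξ‖ / cnorm F)) ∧
    (z = 0 →
      ((Finset.range t).sup' (Finset.nonempty_range_iff.mpr ht.ne') fun j =>
          ‖(Polynomial.hasseDeriv j Ft).eval ξ‖ / cnorm Ft) ≤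
        (2 + ‖ξ‖) ^ ℓ *
          ((Finset.range t).sup' (Finset.nonempty_range_iff.mpr ht.ne') fun j =>
            ‖(Polynomial.hasseDeriv j F).eval ξ‖ / cnorm F)) := by
  subst hFt
  simp only [cnorm_eq_supNorm]
  refine ⟨sup'_norm_eval_hasseDeriv_div_supNorm_le _ z ξ ℓ hF ?_, fun hz => ?_⟩
  · calc (1 + ‖ξ - z‖) ^ ℓ * F.supNorm ≤ ((2 + ‖ξ‖) * max 1 ‖z‖) ^ ℓ * F.supNorm :=
          mul_le_mul_of_nonneg_right
            (pow_le_pow_left₀ (by positivity) (one_add_norm_sub_le ξ z) ℓ) F.supNorm_nonneg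
      _ = (2 + ‖ξ‖) ^ ℓ * (F.supNorm * max 1 ‖z‖ ^ ℓ) := by rw [mul_pow]; ring
      _ ≤ (2 + ‖ξ‖) ^ ℓ * (Real.exp ((X - C z) ^ ℓ * F).natDegree *
            ((X - C z) ^ ℓ * F).supNorm) :=
          mul_le_mul_of_nonneg_left (supNorm_mul_max_one_pow_le z ℓ hF) (by positivity)
      _ = _ := by ring
  · subst hz
    refine sup'_norm_eval_hasseDeriv_div_supNorm_le _ 0 ξ ℓ hF ?_
    rw [map_zero, sub_zero, sub_zero, supNorm_X_pow_mul]
    exact mul_le_mul_of_nonneg_right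
      (pow_le_pow_left₀ (by positivity) (by linarith) ℓ) F.supNorm_nonneg

theorem stmt_1 (n t : ℕ) (hn : 0 < n) (ht : 0 < t) (z ξ : ℂ) (F : Polynomial ℂ)
    (hF : F ≠ 0) (hdeg : F.natDegree ≤ n) (ℓ : ℕ)
    (Ft : Polynomial ℂ) (hFt : Ft = (Polynomial.X - Polynomial.C z) ^ ℓ * F) :
    (((Finset.range t).sup' (Finset.nonempty_range_iff.mpr ht.ne') fun j =>
        ‖(Polynomial.hasseDeriv j Ft).eval ξ‖ / cnorm Ft) ≤
      Real.exp (Ft.natDegree : ℝ) * (2 + ‖ξ‖) ^ ℓ *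
        ((Finset.range t).sup' (Finset.nonempty_range_iff.mpr ht.ne') fun j =>
          ‖(Polynomial.hasseDeriv j F).eval ξ‖ / cnorm F)) ∧
    (z = 0 →
      ((Finset.range t).sup' (Finset.nonempty_range_iff.mpr ht.ne') fun j =>
          ‖(Polynomial.hasseDeriv j Ft).eval ξ‖ / cnorm Ft) ≤
        (2 + ‖ξ‖) ^ ℓ *
          ((Finset.range t).sup' (Finset.nonempty_range_iff.mpr ht.ne') fun j =>
            ‖(Polynomial.hasseDeriv j F).eval ξ‖ / cnorm F)) :=
  stmt_1_general t ht z ξ F hF ℓ Ft hFt
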